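/- Uniqueness of the rubber-band equilibrium: for a finite connected graph G = (V, E) with positive spring constants δ_e and a nonempty set Φ ⊆ V of vertices with fixed positions in ℝ³, the energy E(x) = Σ_{{v,w} ∈ E} δ_{vw} ‖x_v − x_w‖² over all placements x : V → ℝ³ extending the fixed positions has a unique minimizer, characterized by Σ_{w ∈ N(v)} δ_{vw}(x_v − x_w) = 0 for all v ∉ Φ. -/

import Mathlib

/-!
The energy is the quadratic form `E(x) = Σ_v ⟪(L x)_v, x_v⟫` of the weighted Laplacian `L`,
so `E(x + d) = E(x) + 2 Σ_v ⟪(L x)_v, d_v⟫ + E(d)`. If `x` is in equilibrium and `d` vanishes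
on `Φ`, the cross term vanishes, hence `x` minimizes `E`; and it does so strictly, because
`E(d) = 0` forces `d` to be constant along edges, hence zero on the connected graph. The same
argument shows that `x ↦ (x on Φ, L x off Φ)` is an injective linear endomorphism of a
finite-dimensional space, hence surjective, which yields an equilibrium with any boundary values.
Every minimizer coincides with it.
-/

open Set Finset

/-- The rubber-band energy `E(x) = Σ_{{v,w} ∈ E} δ_{vw} ‖x_v - x_w‖²` of a
placement `x` of the vertices in `ℝ³` (each edge counted once, via halving
the symmetric double sum). -/
noncomputable def rubberEnergy {V : Type*} [Fintype V] (G : SimpleGraph V)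
    [DecidableRel G.Adj] (δ : V → V → ℝ)
    (x : V → EuclideanSpace ℝ (Fin 3)) : ℝ :=
  (1 / 2) * ∑ v, ∑ w, if G.Adj v w then δ v w * ‖x v - x w‖ ^ 2 else 0

open scoped RealInnerProductSpace

namespace SimpleGraph

theorem Reachable.apply_eq_of_forall_adj {V β : Type*} {G : SimpleGraph V} {f : V → β}
    (hf : ∀ a b, G.Adj a b → f a = f b) {u v : V} (h : G.Reachable u v) : f u = f v := by
  obtain ⟨p⟩ := h
  induction p with
  | nil => rfl
  | cons hadj _ ih => exact (hf _ _ hadj).trans ih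

variable {V : Type*} [Fintype V] (G : SimpleGraph V) [DecidableRel G.Adj] (δ : V → V → ℝ)

/-- The weighted graph Laplacian; `weightedLaplacian G δ M x v` is the net force that the rubber
bands exert on the vertex `v` of the placement `x`. -/
noncomputable def weightedLaplacian (M : Type*) [AddCommGroup M] [Module ℝ M] :
    (V → M) →ₗ[ℝ] V → M where
  toFun x v := ∑ w ∈ G.neighborFinset v, δ v w • (x v - x w)
  map_add' x y := by
    ext v
    simp only [Pi.add_apply, ← sum_add_distrib, ← smul_add]
    congr! 2
    abel
  map_smul' c x := by
    ext v
    simp only [Pi.smul_apply, smul_sum, RingHom.id_apply, ← smul_sub, smul_comm c]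

theorem weightedLaplacian_apply {M : Type*} [AddCommGroup M] [Module ℝ M] (x : V → M) (v : V) :
    G.weightedLaplacian δ M x v = ∑ w ∈ G.neighborFinset v, δ v w • (x v - x w) :=
  rfl

variable {F : Type*} [NormedAddCommGroup F] [InnerProductSpace ℝ F]

theorem sum_inner_weightedLaplacian (hsymm : ∀ v w, δ v w = δ w v) (x y : V → F) :
    ∑ v, ⟪G.weightedLaplacian δ F x v, y v⟫
      = (1 / 2) * ∑ v, ∑ w, if G.Adj v w then δ v w * ⟪x v - x w, y v - y w⟫ else 0 := by
  set S := ∑ v, ∑ w, if G.Adj v w then δ v w * ⟪x v - x w, y v⟫ else 0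
  have hS : ∑ v, ⟪G.weightedLaplacian δ F x v, y v⟫ = S := by
    refine sum_congr rfl fun v _ => ?_
    rw [weightedLaplacian_apply, sum_inner, neighborFinset_eq_filter, sum_filter]
    simp only [real_inner_smul_left]
  have hswap : (∑ v, ∑ w, if G.Adj v w then δ v w * ⟪x v - x w, y w⟫ else 0) = -S := by
    rw [sum_comm, ← sum_neg_distrib]
    refine sum_congr rfl fun v _ => ?_
    rw [← sum_neg_distrib]
    refine sum_congr rfl fun w _ => ?_
    by_cases h : G.Adj v w
    · rw [if_pos h.symm, if_pos h, hsymm w v, ← neg_sub, inner_neg_left]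
      ring
    · rw [if_neg (fun h' => h h'.symm), if_neg h, neg_zero]
  have hsplit : (∑ v, ∑ w, if G.Adj v w then δ v w * ⟪x v - x w, y v - y w⟫ else 0)
      = S - ∑ v, ∑ w, if G.Adj v w then δ v w * ⟪x v - x w, y w⟫ else 0 := by
    simp only [S, ← sum_sub_distrib, inner_sub_right, mul_sub, ite_sub_ite, sub_zero]
  rw [hS, hsplit, hswap]
  ring

end SimpleGraph

theorem sum_inner_eq_zero_of_eq_zero_off_of_eq_zero_on {V F : Type*} [Fintype V]
    [NormedAddCommGroup F] [InnerProductSpace ℝ F] {s : Set V} {f g : V → F}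
    (hf : ∀ v ∉ s, f v = 0) (hg : ∀ v ∈ s, g v = 0) : ∑ v, ⟪f v, g v⟫ = 0 := by
  refine sum_eq_zero fun v _ => ?_
  by_cases hv : v ∈ s
  · rw [hg v hv, inner_zero_right]
  · rw [hf v hv, inner_zero_left]

section RubberEnergy

open SimpleGraph

variable {V : Type*} [Fintype V] {G : SimpleGraph V} [DecidableRel G.Adj] {δ : V → V → ℝ}
  {Φ : Set V}

local notation "ℝ³" => EuclideanSpace ℝ (Fin 3)

theorem rubberEnergy_eq_sum_inner (hsymm : ∀ v w, δ v w = δ w v) (x : V → ℝ³) :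
    rubberEnergy G δ x = ∑ v, ⟪G.weightedLaplacian δ ℝ³ x v, x v⟫ := by
  simp only [rubberEnergy, sum_inner_weightedLaplacian G δ hsymm, real_inner_self_eq_norm_sq]

theorem rubberEnergy_add (hsymm : ∀ v w, δ v w = δ w v) (x d : V → ℝ³) :
    rubberEnergy G δ (x + d)
      = rubberEnergy G δ x + 2 * ∑ v, ⟪G.weightedLaplacian δ ℝ³ x v, d v⟫ + rubberEnergy G δ d := by
  have hcomm :
      ∑ v, ⟪G.weightedLaplacian δ ℝ³ d v, x v⟫ = ∑ v, ⟪G.weightedLaplacian δ ℝ³ x v, d v⟫ := by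
    simp only [sum_inner_weightedLaplacian G δ hsymm]
    congr! 4
    rw [real_inner_comm]
  simp only [rubberEnergy_eq_sum_inner hsymm, map_add, Pi.add_apply, inner_add_left, inner_add_right,
    sum_add_distrib, hcomm]
  ring

theorem rubberEnergy_nonneg (hnonneg : ∀ v w, G.Adj v w → 0 ≤ δ v w) (x : V → ℝ³) :
    0 ≤ rubberEnergy G δ x := by
  unfold rubberEnergy
  refine mul_nonneg (by norm_num) (sum_nonneg fun v _ => sum_nonneg fun w _ => ?_)
  split_ifs with h
  exacts [mul_nonneg (hnonneg v w h) (sq_nonneg _), le_rfl]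

theorem apply_eq_of_adj_of_rubberEnergy_eq_zero (hpos : ∀ v w, G.Adj v w → 0 < δ v w)
    {x : V → ℝ³} (hx : rubberEnergy G δ x = 0) {a b : V} (hab : G.Adj a b) : x a = x b := by
  have hterm : ∀ v w, 0 ≤ if G.Adj v w then δ v w * ‖x v - x w‖ ^ 2 else 0 := by
    intro v w
    split_ifs with h
    exacts [mul_nonneg (hpos v w h).le (sq_nonneg _), le_rfl]
  have hsum : ∑ v, ∑ w, (if G.Adj v w then δ v w * ‖x v - x w‖ ^ 2 else 0) = 0 := by
    simpa [rubberEnergy] using hx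
  rw [sum_eq_zero_iff_of_nonneg fun v _ => sum_nonneg fun w _ => hterm v w] at hsum
  have hab0 := (sum_eq_zero_iff_of_nonneg fun w _ => hterm a w).1 (hsum a (mem_univ a)) b
    (mem_univ b)
  rw [if_pos hab, mul_eq_zero, pow_eq_zero_iff two_ne_zero, norm_eq_zero, sub_eq_zero] at hab0
  exact hab0.resolve_left (hpos a b hab).ne'

theorem eq_zero_of_rubberEnergy_eq_zero (hG : G.Connected) (hpos : ∀ v w, G.Adj v w → 0 < δ v w)
    {Φ : Set V} (hΦ : Φ.Nonempty) {x : V → ℝ³} (hxΦ : ∀ v ∈ Φ, x v = 0)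
    (hx : rubberEnergy G δ x = 0) : x = 0 := by
  obtain ⟨u, hu⟩ := hΦ
  funext v
  rw [← (hG u v).apply_eq_of_forall_adj fun a b => apply_eq_of_adj_of_rubberEnergy_eq_zero hpos hx,
    hxΦ u hu, Pi.zero_apply]

theorem rubberEnergy_eq_add_rubberEnergy_sub (hsymm : ∀ v w, δ v w = δ w v) {x y : V → ℝ³}
    (hx : ∀ v ∉ Φ, G.weightedLaplacian δ ℝ³ x v = 0) (hy : ∀ v ∈ Φ, y v = x v) :
    rubberEnergy G δ y = rubberEnergy G δ x + rubberEnergy G δ (y - x) := by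
  have hcross : ∑ v, ⟪G.weightedLaplacian δ ℝ³ x v, (y - x) v⟫ = 0 :=
    sum_inner_eq_zero_of_eq_zero_off_of_eq_zero_on hx fun v hv => sub_eq_zero.2 (hy v hv)
  conv_lhs => rw [← add_sub_cancel x y]
  rw [rubberEnergy_add hsymm, hcross, mul_zero, add_zero]

theorem rubberEnergy_le_of_weightedLaplacian_eq_zero (hsymm : ∀ v w, δ v w = δ w v)
    (hnonneg : ∀ v w, G.Adj v w → 0 ≤ δ v w) {x y : V → ℝ³}
    (hx : ∀ v ∉ Φ, G.weightedLaplacian δ ℝ³ x v = 0) (hy : ∀ v ∈ Φ, y v = x v) :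
    rubberEnergy G δ x ≤ rubberEnergy G δ y := by
  rw [rubberEnergy_eq_add_rubberEnergy_sub hsymm hx hy]
  exact le_add_of_nonneg_right (rubberEnergy_nonneg hnonneg _)

theorem eq_of_rubberEnergy_le_of_weightedLaplacian_eq_zero (hG : G.Connected)
    (hsymm : ∀ v w, δ v w = δ w v) (hpos : ∀ v w, G.Adj v w → 0 < δ v w) (hΦ : Φ.Nonempty)
    {x y : V → ℝ³} (hx : ∀ v ∉ Φ, G.weightedLaplacian δ ℝ³ x v = 0) (hy : ∀ v ∈ Φ, y v = x v)
    (hle : rubberEnergy G δ y ≤ rubberEnergy G δ x) : y = x := by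
  rw [rubberEnergy_eq_add_rubberEnergy_sub hsymm hx hy] at hle
  have hE : rubberEnergy G δ (y - x) = 0 :=
    le_antisymm (by linarith) (rubberEnergy_nonneg (fun v w h => (hpos v w h).le) _)
  exact sub_eq_zero.1 <|
    eq_zero_of_rubberEnergy_eq_zero hG hpos hΦ (fun v hv => sub_eq_zero.2 (hy v hv)) hE

theorem exists_weightedLaplacian_eq_zero (hG : G.Connected) (hsymm : ∀ v w, δ v w = δ w v)
    (hpos : ∀ v w, G.Adj v w → 0 < δ v w) (hΦ : Φ.Nonempty) (x₀ : V → ℝ³) :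
    ∃ x : V → ℝ³, (∀ v ∈ Φ, x v = x₀ v) ∧ ∀ v ∉ Φ, G.weightedLaplacian δ ℝ³ x v = 0 := by
  classical
  let T : (V → ℝ³) →ₗ[ℝ] V → ℝ³ := LinearMap.pi fun v =>
    if v ∈ Φ then LinearMap.proj v else LinearMap.proj v ∘ₗ G.weightedLaplacian δ ℝ³
  have hT : ∀ x v, T x v = if v ∈ Φ then x v else G.weightedLaplacian δ ℝ³ x v := by
    intro x v
    by_cases hv : v ∈ Φ <;> simp [T, hv]
  have hinj : Function.Injective T := by
    rw [← LinearMap.ker_eq_bot, LinearMap.ker_eq_bot']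
    intro x hx
    have hxΦ : ∀ v ∈ Φ, x v = 0 := fun v hv => by simpa [hT, hv] using congrFun hx v
    have hLx : ∀ v ∉ Φ, G.weightedLaplacian δ ℝ³ x v = 0 := fun v hv => by
      simpa [hT, hv] using congrFun hx v
    refine eq_zero_of_rubberEnergy_eq_zero hG hpos hΦ hxΦ ?_
    rw [rubberEnergy_eq_sum_inner hsymm]
    exact sum_inner_eq_zero_of_eq_zero_off_of_eq_zero_on hLx hxΦ
  obtain ⟨x, hx⟩ := LinearMap.injective_iff_surjective.1 hinj fun v => if v ∈ Φ then x₀ v else 0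
  refine ⟨x, fun v hv => ?_, fun v hv => ?_⟩
  · simpa [hT, hv] using congrFun hx v
  · simpa [hT, hv] using congrFun hx v

end RubberEnergy

theorem rubber_band_unique_minimizer_general {V : Type*} [Fintype V]
    (G : SimpleGraph V) [DecidableRel G.Adj] (hGconn : G.Connected)
    (Φ : Set V) (hΦ : Φ.Nonempty)
    (x₀ : V → EuclideanSpace ℝ (Fin 3))
    (δ : V → V → ℝ) (hδsymm : ∀ v w, δ v w = δ w v)
    (hδpos : ∀ v w, G.Adj v w → 0 < δ v w) :
    (∃! x : V → EuclideanSpace ℝ (Fin 3),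
        (∀ v ∈ Φ, x v = x₀ v) ∧
        ∀ y : V → EuclideanSpace ℝ (Fin 3), (∀ v ∈ Φ, y v = x₀ v) →
          rubberEnergy G δ x ≤ rubberEnergy G δ y) ∧
    ∀ x : V → EuclideanSpace ℝ (Fin 3), (∀ v ∈ Φ, x v = x₀ v) →
      ((∀ y : V → EuclideanSpace ℝ (Fin 3), (∀ v ∈ Φ, y v = x₀ v) →
          rubberEnergy G δ x ≤ rubberEnergy G δ y) ↔
        ∀ v ∉ Φ, ∑ w ∈ G.neighborFinset v, δ v w • (x v - x w) = 0) := by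
  obtain ⟨xe, hxe₀, hxe⟩ := exists_weightedLaplacian_eq_zero hGconn hδsymm hδpos hΦ x₀
  have hδnn : ∀ v w, G.Adj v w → 0 ≤ δ v w := fun v w h => (hδpos v w h).le
  have min_of_eq {x} (hx₀ : ∀ v ∈ Φ, x v = x₀ v)
      (hx : ∀ v ∉ Φ, G.weightedLaplacian δ _ x v = 0) (y) (hy₀ : ∀ v ∈ Φ, y v = x₀ v) :
      rubberEnergy G δ x ≤ rubberEnergy G δ y :=
    rubberEnergy_le_of_weightedLaplacian_eq_zero hδsymm hδnn hx fun v hv =>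
      (hy₀ v hv).trans (hx₀ v hv).symm
  have eq_of_min {y} (hy₀ : ∀ v ∈ Φ, y v = x₀ v)
      (hy : ∀ z : V → EuclideanSpace ℝ (Fin 3), (∀ v ∈ Φ, z v = x₀ v) →
        rubberEnergy G δ y ≤ rubberEnergy G δ z) : y = xe :=
    eq_of_rubberEnergy_le_of_weightedLaplacian_eq_zero hGconn hδsymm hδpos hΦ hxe
      (fun v hv => (hy₀ v hv).trans (hxe₀ v hv).symm) (hy xe hxe₀)
  refine ⟨⟨xe, ⟨hxe₀, min_of_eq hxe₀ hxe⟩, fun y hy => eq_of_min hy.1 hy.2⟩, fun x hx₀ => ?_⟩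
  exact ⟨fun hx => eq_of_min hx₀ hx ▸ hxe, fun hx => min_of_eq hx₀ hx⟩

/-- **Uniqueness of the rubber-band equilibrium.**  For a finite connected
graph with positive spring constants and a nonempty set `Φ` of vertices with
prescribed positions in `ℝ³`, the energy has a unique minimizer among all
placements extending the prescribed positions, and a placement is the
minimizer iff it satisfies the equilibrium equations
`Σ_{w ∈ N(v)} δ_{vw}(x_v - x_w) = 0` at every free vertex `v ∉ Φ`. -/
theorem rubber_band_unique_minimizer {V : Type*} [Fintype V] [DecidableEq V]
    (G : SimpleGraph V) [DecidableRel G.Adj] (hGconn : G.Connected)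
    (Φ : Set V) (hΦ : Φ.Nonempty)
    (x₀ : V → EuclideanSpace ℝ (Fin 3))
    (δ : V → V → ℝ) (hδsymm : ∀ v w, δ v w = δ w v)
    (hδpos : ∀ v w, G.Adj v w → 0 < δ v w) :
    (∃! x : V → EuclideanSpace ℝ (Fin 3),
        (∀ v ∈ Φ, x v = x₀ v) ∧
        ∀ y : V → EuclideanSpace ℝ (Fin 3), (∀ v ∈ Φ, y v = x₀ v) →
          rubberEnergy G δ x ≤ rubberEnergy G δ y) ∧
    ∀ x : V → EuclideanSpace ℝ (Fin 3), (∀ v ∈ Φ, x v = x₀ v) →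
      ((∀ y : V → EuclideanSpace ℝ (Fin 3), (∀ v ∈ Φ, y v = x₀ v) →
          rubberEnergy G δ x ≤ rubberEnergy G δ y) ↔
        ∀ v ∉ Φ, ∑ w ∈ G.neighborFinset v, δ v w • (x v - x w) = 0) :=
  rubber_band_unique_minimizer_general G hGconn Φ hΦ x₀ δ hδsymm hδpos
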